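/- (Theorem 1 of the paper, vector form.) Let X ⊆ ℝⁿ and U ⊆ ℝᵐ, and let f, f̂ : ℝⁿ × ℝᵐ → ℝⁿ. Suppose that for every coordinate i ∈ {1,…,n}: (i) the function gᵢ(x,u) = |f̂ᵢ(x,u) − fᵢ(x,u)| is Lipschitz in x on X with constant L2xᵢ ≥ 0 uniformly over u ∈ U, and Lipschitz in u on U with constant L2uᵢ ≥ 0 uniformly over x ∈ X; (ii) γᵢ : ℝⁿ × ℝᵐ → ℝ satisfies |γᵢ(x,u) − γᵢ(y,w)| ≤ L1ᵢ·√(‖x − y‖² + ‖u − w‖²) for all x, y ∈ ℝⁿ, u, w ∈ ℝᵐ, with L1ᵢ ≥ 0; (iii) finite sample sets {x₁,…,x_N} ⊆ X and {u₁,…,u_M} ⊆ U with radii εx, εu ≥ 0 cover X and U in the sense that every x ∈ X is within Euclidean distance εx of some x_r and every u ∈ U is within εu of some u_s; (iv) gᵢ(x_r,u_s) ≤ γᵢ(x_r,u_s) for all i, r, s. Define Lᵢ = L1ᵢ·√(εx² + εu²) + L2xᵢ·εx + L2uᵢ·εu. Then for all x ∈ X and u ∈ U, the next state of the simulator is confined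 coordinate-wise to f̂ᵢ(x,u) ∈ [fᵢ(x,u) − (γᵢ(x,u) + Lᵢ), fᵢ(x,u) + (γᵢ(x,u) + Lᵢ)] for every i ∈ {1,…,n}. -/
import Mathlib


/-- Theorem 1 of the paper, vector form: under coordinate-wise separate
Lipschitz continuity of `gᵢ(x,u) = |f̂ᵢ(x,u) − fᵢ(x,u)|`, Lipschitz continuity of each
`γᵢ` with respect to the concatenated vector, covering sample sets, and the scenario
constraints `gᵢ(x_r,u_s) ≤ γᵢ(x_r,u_s)`, the simulator next state is confined
coordinate-wise to
`f̂ᵢ(x,u) ∈ [fᵢ(x,u) − (γᵢ(x,u) + Lᵢ), fᵢ(x,u) + (γᵢ(x,u) + Lᵢ)]` where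
`Lᵢ = L1ᵢ·√(εx² + εu²) + L2xᵢ·εx + L2uᵢ·εu`. -/
theorem simulation_gap_formal_guarantee_vector
    {n m : ℕ}
    (X : Set (EuclideanSpace ℝ (Fin n))) (U : Set (EuclideanSpace ℝ (Fin m)))
    (f fhat : EuclideanSpace ℝ (Fin n) → EuclideanSpace ℝ (Fin m) → EuclideanSpace ℝ (Fin n))
    (γ : Fin n → EuclideanSpace ℝ (Fin n) → EuclideanSpace ℝ (Fin m) → ℝ)
    (L2x L2u L1 : Fin n → ℝ)
    (hL2x : ∀ i, 0 ≤ L2x i) (hL2u : ∀ i, 0 ≤ L2u i) (hL1 : ∀ i, 0 ≤ L1 i)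
    -- (i) separate Lipschitz continuity of gᵢ(x,u) = |f̂ᵢ(x,u) − fᵢ(x,u)|
    (hLipx : ∀ i, ∀ u ∈ U, ∀ x ∈ X, ∀ y ∈ X,
      |(|fhat x u i - f x u i| - |fhat y u i - f y u i|)| ≤ L2x i * ‖x - y‖)
    (hLipu : ∀ i, ∀ x ∈ X, ∀ u ∈ U, ∀ w ∈ U,
      |(|fhat x u i - f x u i| - |fhat x w i - f x w i|)| ≤ L2u i * ‖u - w‖)
    -- (ii) Lipschitz continuity of γᵢ w.r.t. the concatenated vector
    (hLipγ : ∀ i, ∀ (x y : EuclideanSpace ℝ (Fin n)) (u w : EuclideanSpace ℝ (Fin m)),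
      |γ i x u - γ i y w| ≤ L1 i * Real.sqrt (‖x - y‖ ^ 2 + ‖u - w‖ ^ 2))
    -- (iii) finite sample sets covering X and U
    (N M : ℕ) (xs : Fin N → EuclideanSpace ℝ (Fin n)) (us : Fin M → EuclideanSpace ℝ (Fin m))
    (hxs : ∀ r, xs r ∈ X) (hus : ∀ s, us s ∈ U)
    (εx εu : ℝ) (hεx : 0 ≤ εx) (hεu : 0 ≤ εu)
    (hcovX : ∀ x ∈ X, ∃ r, ‖x - xs r‖ ≤ εx)
    (hcovU : ∀ u ∈ U, ∃ s, ‖u - us s‖ ≤ εu)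
    -- (iv) scenario constraints on the samples
    (hsamp : ∀ i r s, |fhat (xs r) (us s) i - f (xs r) (us s) i| ≤ γ i (xs r) (us s)) :
    ∀ x ∈ X, ∀ u ∈ U, ∀ i : Fin n,
      fhat x u i ∈
        Set.Icc
          (f x u i - (γ i x u + (L1 i * Real.sqrt (εx ^ 2 + εu ^ 2) + L2x i * εx + L2u i * εu)))
          (f x u i + (γ i x u + (L1 i * Real.sqrt (εx ^ 2 + εu ^ 2) + L2x i * εx + L2u i * εu))) := by
  intro x hx u hu i
  obtain ⟨r, hr⟩ := hcovX x hx
  obtain ⟨s, hs⟩ := hcovU u hu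
  set L := L1 i * Real.sqrt (εx ^ 2 + εu ^ 2) + L2x i * εx + L2u i * εu with hLdef
  have h1 : |fhat x u i - f x u i| - |fhat (xs r) u i - f (xs r) u i| ≤ L2x i * εx := by
    have := hLipx i u hu x hx (xs r) (hxs r)
    have h' := (abs_le.mp this).2
    calc |fhat x u i - f x u i| - |fhat (xs r) u i - f (xs r) u i| ≤ L2x i * ‖x - xs r‖ := h'
      _ ≤ L2x i * εx := by exact mul_le_mul_of_nonneg_left hr (hL2x i)
  have h2 : |fhat (xs r) u i - f (xs r) u i| - |fhat (xs r) (us s) i - f (xs r) (us s) i|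
      ≤ L2u i * εu := by
    have := hLipu i (xs r) (hxs r) u hu (us s) (hus s)
    have h' := (abs_le.mp this).2
    calc _ ≤ L2u i * ‖u - us s‖ := h'
      _ ≤ L2u i * εu := mul_le_mul_of_nonneg_left hs (hL2u i)
  have h3 : γ i (xs r) (us s) ≤ γ i x u + L1 i * Real.sqrt (εx ^ 2 + εu ^ 2) := by
    have := hLipγ i (xs r) x (us s) u
    have h' := (abs_le.mp this).2
    have hsq : Real.sqrt (‖xs r - x‖ ^ 2 + ‖us s - u‖ ^ 2) ≤ Real.sqrt (εx ^ 2 + εu ^ 2) := by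
      apply Real.sqrt_le_sqrt
      have hx' : ‖xs r - x‖ ≤ εx := by rwa [norm_sub_rev] at hr
      have hu' : ‖us s - u‖ ≤ εu := by rwa [norm_sub_rev] at hs
      nlinarith [norm_nonneg (xs r - x), norm_nonneg (us s - u)]
    nlinarith [mul_le_mul_of_nonneg_left hsq (hL1 i)]
  have key : |fhat x u i - f x u i| ≤ γ i x u + L := by
    have h4 := hsamp i r s
    have := h3
    rw [hLdef]
    linarith
  have := abs_le.mp key
  constructor <;> linarith [this.1, this.2]
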